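/- Let s ∈ (0,∞)^k and let P be a canonical span program computing f : {0,1}^k → {0,1}, with input vectors |v_i⟩ indexed by I. Assume that for each x with f(x) = 0, the vector |x⟩ is an optimal witness for f_P(x) = 0, i.e., Σ_{j∈[k]} s_j Σ_{i∈I_{j,1−x_j}} |⟨v_i|x⟩|² = wsize_s(P, x). Let B be the block matrix with rows indexed by f⁻¹(0) ⊔ I and columns indexed by {0} ⊔ I, whose column 0 is (|t⟩; 0) and whose column i ∈ I is (|v_i⟩; |i⟩) (i.e., B = [[|t⟩, A],[0, 𝟙_I]] with A = Σ_{i∈I}|v_i⟩⟨i|). Then ‖abs(B)‖² ≤ 2^k (1 + wsize_s(P) / min_{j∈[k]} s_j) + |I|, where abs(B) denotes the entrywise absolute value of B and ‖·‖ the operator norm. -/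

import Mathlib

noncomputable section

/-- Operator (spectral) norm of a real matrix. -/
def opNorm {m n : Type} [Fintype m] [Fintype n] [DecidableEq n] (M : Matrix m n ℝ) : ℝ :=
  ‖LinearMap.toContinuousLinearMap (Matrix.toEuclideanLin M)‖

/-- The general adversary bound with costs `s` of `f : {0,1}^ι → {0,1}`. -/
def ADVpm {ι : Type} [Fintype ι] [DecidableEq ι] (s : ι → ℝ) (f : (ι → Bool) → Bool) : ℝ :=
  sSup { r : ℝ | ∃ Γ : Matrix (ι → Bool) (ι → Bool) ℝ, Γ.IsSymm ∧
    (∀ x y, f x = f y → Γ x y = 0) ∧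
    (∀ j : ι, opNorm (Matrix.of fun x y => if x j ≠ y j then Γ x y else 0) ≤ s j) ∧
    r = opNorm Γ }

/-- The nonnegative-weight adversary bound with costs `s`. -/
def ADVnn {ι : Type} [Fintype ι] [DecidableEq ι] (s : ι → ℝ) (f : (ι → Bool) → Bool) : ℝ :=
  sSup { r : ℝ | ∃ Γ : Matrix (ι → Bool) (ι → Bool) ℝ, Γ.IsSymm ∧
    (∀ x y, 0 ≤ Γ x y) ∧
    (∀ x y, f x = f y → Γ x y = 0) ∧
    (∀ j : ι, opNorm (Matrix.of fun x y => if x j ≠ y j then Γ x y else 0) ≤ s j) ∧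
    r = opNorm Γ }

end

noncomputable section

/-- A span program on input bits indexed by `ι`, with a finite-dimensional complex inner
product space `V`, a target vector, free input vectors indexed by `Ifree`, and input
vectors indexed by `Iin j b` (available when the `j`-th input bit equals `b`). -/
structure SpanProgram (ι : Type) where
  V : Type
  [nacg : NormedAddCommGroup V]
  [ips : InnerProductSpace ℂ V]
  [fd : FiniteDimensional ℂ V]
  Ifree : Type
  [freeFin : Fintype Ifree]
  [freeDec : DecidableEq Ifree]
  Iin : ι → Bool → Type
  [inFin : ∀ j b, Fintype (Iin j b)]
  [inDec : ∀ j b, DecidableEq (Iin j b)]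
  target : V
  vfree : Ifree → V
  vin : ∀ j b, Iin j b → V

attribute [instance] SpanProgram.nacg SpanProgram.ips SpanProgram.fd
attribute [instance] SpanProgram.freeFin SpanProgram.freeDec
attribute [instance] SpanProgram.inFin SpanProgram.inDec

namespace SpanProgram

variable {ι : Type} [Fintype ι] [DecidableEq ι]

/-- The index set `I = I_free ∪ ⋃_{j,b} I_{j,b}` of all input vectors. -/
abbrev Idx (P : SpanProgram ι) : Type := P.Ifree ⊕ Σ j : ι, Σ b : Bool, P.Iin j b

/-- All input vectors, as a single family over `Idx`. -/
def vec (P : SpanProgram ι) : P.Idx → P.V :=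
  Sum.elim P.vfree (fun p => P.vin p.1 p.2.1 p.2.2)

/-- `P` evaluates to true on `x` iff the target lies in the span of the available
input vectors (the free ones together with those indexed by `I_{j, x_j}`). -/
def spanned (P : SpanProgram ι) (x : ι → Bool) : Prop :=
  P.target ∈ Submodule.span ℂ
    (Set.range P.vfree ∪ ⋃ j : ι, Set.range (P.vin j (x j)))

/-- The boolean function computed by `P`. -/
def fP (P : SpanProgram ι) (x : ι → Bool) : Bool :=
  letI := Classical.propDecidable (P.spanned x)
  decide (P.spanned x)

/-- `w : ℂ^I` is a witness for `f_P(x) = 1`: it is supported on available input vectors,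
and the input vectors weighted by `w` sum to the target. -/
def IsWitness1 (P : SpanProgram ι) (x : ι → Bool) (w : P.Idx → ℂ) : Prop :=
  (∀ (j : ι) (b : Bool) (i : P.Iin j b), b ≠ x j → w (.inr ⟨j, b, i⟩) = 0) ∧
  ∑ i : P.Idx, w i • P.vec i = P.target

/-- `w' ∈ V` is a witness for `f_P(x) = 0`: it has unit inner product with the target and
is orthogonal to all available input vectors. -/
def IsWitness0 (P : SpanProgram ι) (x : ι → Bool) (w' : P.V) : Prop :=
  (inner ℂ P.target w' : ℂ) = 1 ∧
  (∀ i : P.Ifree, (inner ℂ (P.vfree i) w' : ℂ) = 0) ∧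
  (∀ (j : ι) (i : P.Iin j (x j)), (inner ℂ (P.vin j (x j) i) w' : ℂ) = 0)

/-- `‖S|w⟩‖²`, the size of a `1`-witness `w` with costs `s`. -/
def wval1 (P : SpanProgram ι) (s : ι → ℝ) (w : P.Idx → ℂ) : ℝ :=
  ∑ j : ι, ∑ b : Bool, ∑ i : P.Iin j b, s j * ‖w (.inr ⟨j, b, i⟩)‖ ^ 2

/-- `1 + ‖S^f|w⟩‖²`, the full size of a `1`-witness `w` with costs `s`. -/
def wval1f (P : SpanProgram ι) (s : ι → ℝ) (w : P.Idx → ℂ) : ℝ :=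
  1 + (∑ i : P.Ifree, ‖w (.inl i)‖ ^ 2) + P.wval1 s w

/-- `‖S A†|w'⟩‖²`, the size of a `0`-witness `w'` with costs `s`. -/
def wval0 (P : SpanProgram ι) (s : ι → ℝ) (w' : P.V) : ℝ :=
  ∑ j : ι, ∑ b : Bool, ∑ i : P.Iin j b, s j * ‖(inner ℂ (P.vin j b i) w' : ℂ)‖ ^ 2

/-- `‖|w'⟩‖² + ‖S A†|w'⟩‖²`, the full size of a `0`-witness `w'` with costs `s`. -/
def wval0f (P : SpanProgram ι) (s : ι → ℝ) (w' : P.V) : ℝ :=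
  ‖w'‖ ^ 2 + P.wval0 s w'

/-- The witness size of `P` on input `x` with costs `s`. -/
def wsizex (P : SpanProgram ι) (s : ι → ℝ) (x : ι → Bool) : ℝ :=
  if P.fP x then sInf { r | ∃ w, P.IsWitness1 x w ∧ r = P.wval1 s w }
  else sInf { r | ∃ w', P.IsWitness0 x w' ∧ r = P.wval0 s w' }

/-- The witness size of `P` with costs `s`. -/
def wsize (P : SpanProgram ι) (s : ι → ℝ) : ℝ := ⨆ x : ι → Bool, P.wsizex s x

/-- The full witness size of `P` on input `x` with costs `s`. -/
def wsizefx (P : SpanProgram ι) (s : ι → ℝ) (x : ι → Bool) : ℝ :=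
  if P.fP x then sInf { r | ∃ w, P.IsWitness1 x w ∧ r = P.wval1f s w }
  else sInf { r | ∃ w', P.IsWitness0 x w' ∧ r = P.wval0f s w' }

/-- The full witness size of `P` with costs `s`. -/
def wsizef (P : SpanProgram ι) (s : ι → ℝ) : ℝ := ⨆ x : ι → Bool, P.wsizefx s x

end SpanProgram

end

/-- The canonical span program with data `(Iin, vin)` for `f`: the space is
`ℂ^{f⁻¹(0)}`, the target is `Σ_{x : f(x)=0} |x⟩`, and there are no free input vectors. -/
noncomputable def canonicalSP {k : ℕ} (f : (Fin k → Bool) → Bool)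
    (Iin : Fin k → Bool → Type) [∀ j b, Fintype (Iin j b)] [∀ j b, DecidableEq (Iin j b)]
    (vin : ∀ j b, Iin j b → EuclideanSpace ℂ {x : Fin k → Bool // f x = false}) :
    SpanProgram (Fin k) where
  V := EuclideanSpace ℂ {x : Fin k → Bool // f x = false}
  Ifree := Empty
  Iin := Iin
  target := WithLp.toLp 2 (fun _ => 1)
  vfree := Empty.elim
  vin := vin

/-! The operator norm of `abs B` is at most its Frobenius norm, whose square is
`|f⁻¹(0)| + Σ_x Σ_i |⟨v_i|x⟩|² + |I|`. In the row of `x ∈ f⁻¹(0)` only the indices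
`i ∈ I_{j, ¬x_j}` contribute, because `|x⟩` is a `0`-witness, and optimality of `|x⟩` says that
their `s`-weighted contribution is `wsize_s(P, x) ≤ wsize_s(P)`; dividing by `min_j s_j` and
using `|f⁻¹(0)| ≤ 2^k` gives the bound. -/

open Finset Matrix

lemma opNorm_sq_le_sum_sq {m n : Type} [Fintype m] [Fintype n] [DecidableEq n]
    (M : Matrix m n ℝ) : opNorm M ^ 2 ≤ ∑ r, ∑ c, M r c ^ 2 := by
  set F := ∑ r, ∑ c, M r c ^ 2 with hF_def
  have hF : 0 ≤ F := by positivity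
  have hsq : ∀ x : EuclideanSpace ℝ n, ‖toEuclideanLin M x‖ ^ 2 ≤ F * ‖x‖ ^ 2 := fun x => by
    simp only [EuclideanSpace.real_norm_sq_eq, toLpLin_apply, mulVec, dotProduct, hF_def]
    rw [sum_mul]
    exact sum_le_sum fun r _ => sum_mul_sq_le_sq_mul_sq _ _ _
  have hle : opNorm M ≤ √F := ContinuousLinearMap.opNorm_le_bound _ (Real.sqrt_nonneg F)
    fun x => by
      rw [← Real.sqrt_sq (norm_nonneg x), ← Real.sqrt_mul hF]
      exact Real.le_sqrt_of_sq_le (hsq x)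
  calc opNorm M ^ 2 ≤ √F ^ 2 := pow_le_pow_left₀ (norm_nonneg _) hle 2
    _ = F := Real.sq_sqrt hF

lemma sum_sq_norm_fromBlocks {l m n o α : Type*} [Fintype l] [Fintype m] [Fintype n]
    [Fintype o] [Norm α] (A : Matrix n l α) (B : Matrix n m α) (C : Matrix o l α)
    (D : Matrix o m α) :
    ∑ r, ∑ c, ‖fromBlocks A B C D r c‖ ^ 2
      = (∑ r, ∑ c, ‖A r c‖ ^ 2) + (∑ r, ∑ c, ‖B r c‖ ^ 2)
        + ((∑ r, ∑ c, ‖C r c‖ ^ 2) + ∑ r, ∑ c, ‖D r c‖ ^ 2) := by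
  simp only [Fintype.sum_sum_type, fromBlocks_apply₁₁, fromBlocks_apply₁₂, fromBlocks_apply₂₁,
    fromBlocks_apply₂₂, sum_add_distrib]
  ring

lemma sum_sq_norm_one {n α : Type*} [Fintype n] [DecidableEq n] [SeminormedRing α]
    [NormOneClass α] : ∑ r : n, ∑ c : n, ‖(1 : Matrix n n α) r c‖ ^ 2 = Fintype.card n := by
  simp [one_apply, apply_ite]

lemma sum_sigma_le_div_iInf {ι : Type*} [Fintype ι] {κ : ι → Bool → Type*}
    [∀ j b, Fintype (κ j b)] {s : ι → ℝ} (hs : ∀ j, 0 < s j) (x : ι → Bool)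
    (a : ∀ j b, κ j b → ℝ) (ha : ∀ j b i, 0 ≤ a j b i) (hax : ∀ j i, a j (x j) i = 0) :
    ∑ p : Σ j, Σ b, κ j b, a p.1 p.2.1 p.2.2
      ≤ (∑ j, ∑ i : κ j (!x j), s j * a j (!x j) i) / ⨅ j, s j := by
  rcases isEmpty_or_nonempty ι with hι | hι
  · simp
  obtain ⟨j₀, hj₀⟩ := exists_eq_ciInf_of_finite (f := s)
  have hrow : ∀ j, ∑ b, ∑ i, a j b i = ∑ i, a j (!x j) i := fun j => by
    have h0 := hax j
    generalize x j = b at h0 ⊢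
    cases b <;> simp [h0] <;> rfl
  rw [le_div_iff₀ (hj₀ ▸ hs j₀), Fintype.sum_sigma, sum_mul]
  refine sum_le_sum fun j _ => ?_
  rw [Fintype.sum_sigma, hrow, ← mul_sum, mul_comm]
  exact mul_le_mul_of_nonneg_right (ciInf_le (Set.finite_range s).bddBelow j)
    (sum_nonneg fun i _ => ha _ _ i)

namespace SpanProgram

variable {ι : Type} [Fintype ι] (P : SpanProgram ι) {s : ι → ℝ}

lemma wsizex_nonneg (hs : ∀ j, 0 ≤ s j) (x : ι → Bool) : 0 ≤ P.wsizex s x := by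
  unfold wsizex wval1 wval0
  split <;>
  · refine Real.sInf_nonneg ?_
    rintro r ⟨w, -, rfl⟩
    exact sum_nonneg fun j _ => sum_nonneg fun b _ => sum_nonneg fun i _ =>
      mul_nonneg (hs j) (sq_nonneg _)

lemma wsizex_le_wsize (x : ι → Bool) : P.wsizex s x ≤ P.wsize s :=
  le_ciSup (Set.finite_range _).bddAbove x

lemma wsize_nonneg (hs : ∀ j, 0 ≤ s j) : 0 ≤ P.wsize s :=
  (P.wsizex_nonneg hs fun _ => false).trans (P.wsizex_le_wsize _)

end SpanProgram

lemma canonicalSP_sum_norm_sq_le_wsize_div {k : ℕ} {f : (Fin k → Bool) → Bool} {s : Fin k → ℝ}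
    (hs : ∀ j, 0 < s j) {Iin : Fin k → Bool → Type} [∀ j b, Fintype (Iin j b)]
    [∀ j b, DecidableEq (Iin j b)]
    {vin : ∀ j b, Iin j b → EuclideanSpace ℂ {x : Fin k → Bool // f x = false}}
    {x : Fin k → Bool} (hx : f x = false) (horth : ∀ j i, vin j (x j) i ⟨x, hx⟩ = 0)
    (hopt : ∑ j, ∑ i : Iin j (!(x j)), s j * ‖vin j (!(x j)) i ⟨x, hx⟩‖ ^ 2
        = (canonicalSP f Iin vin).wsizex s x) :
    ∑ p : Σ j, Σ b, Iin j b, ‖vin p.1 p.2.1 p.2.2 ⟨x, hx⟩‖ ^ 2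
      ≤ (canonicalSP f Iin vin).wsize s / ⨅ j, s j :=
  calc ∑ p : Σ j, Σ b, Iin j b, ‖vin p.1 p.2.1 p.2.2 ⟨x, hx⟩‖ ^ 2
      ≤ (∑ j, ∑ i : Iin j (!x j), s j * ‖vin j (!x j) i ⟨x, hx⟩‖ ^ 2) / ⨅ j, s j :=
        sum_sigma_le_div_iInf hs x (fun j b i => ‖vin j b i ⟨x, hx⟩‖ ^ 2)
          (fun _ _ _ => sq_nonneg _) (fun j i => by simp [horth j i])
    _ ≤ (canonicalSP f Iin vin).wsize s / ⨅ j, s j := by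
      rw [hopt]
      exact div_le_div_of_nonneg_right ((canonicalSP f Iin vin).wsizex_le_wsize x)
        (Real.iInf_nonneg fun j => (hs j).le)

theorem canonical_norm_bound {k : ℕ} (f : (Fin k → Bool) → Bool)
    (s : Fin k → ℝ) (hs : ∀ j, 0 < s j)
    (Iin : Fin k → Bool → Type) [∀ j b, Fintype (Iin j b)] [∀ j b, DecidableEq (Iin j b)]
    (vin : ∀ j b, Iin j b → EuclideanSpace ℂ {x : Fin k → Bool // f x = false})
    (horth : ∀ (x : Fin k → Bool) (hx : f x = false) (j : Fin k) (i : Iin j (x j)),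
      vin j (x j) i ⟨x, hx⟩ = 0)
    (hopt : ∀ (x : Fin k → Bool) (hx : f x = false),
      ∑ j : Fin k, ∑ i : Iin j (!(x j)), s j * ‖vin j (!(x j)) i ⟨x, hx⟩‖ ^ 2
        = (canonicalSP f Iin vin).wsizex s x)
    (B : Matrix ({x : Fin k → Bool // f x = false} ⊕ (Σ j : Fin k, Σ b : Bool, Iin j b))
            (Unit ⊕ (Σ j : Fin k, Σ b : Bool, Iin j b)) ℂ)
    (hB : B = Matrix.of fun row col => match row, col with
      | .inl _, .inl _ => 1
      | .inl x, .inr ⟨j, b, i⟩ => vin j b i x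
      | .inr _, .inl _ => 0
      | .inr i, .inr i' => if i = i' then 1 else 0) :
    opNorm (Matrix.of fun row col => ‖B row col‖) ^ 2
      ≤ 2 ^ k * (1 + (canonicalSP f Iin vin).wsize s / ⨅ j, s j)
        + Fintype.card (Σ j : Fin k, Σ b : Bool, Iin j b) := by
  set W := (canonicalSP f Iin vin).wsize s / ⨅ j, s j
  set A : Matrix {x // f x = false} (Σ j, Σ b, Iin j b) ℂ := of fun x p => vin p.1 p.2.1 p.2.2 x
  have hB_blocks : B = fromBlocks (of fun _ _ => 1) A 0 1 := by
    rw [hB]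
    ext (x | p) (u | ⟨j, b, i⟩) <;> rfl
  have hc : 0 ≤ 1 + W := add_nonneg zero_le_one <| div_nonneg
    ((canonicalSP f Iin vin).wsize_nonneg fun j => (hs j).le) (Real.iInf_nonneg fun j => (hs j).le)
  have hcard : (Fintype.card {x // f x = false} : ℝ) ≤ 2 ^ k := by
    exact_mod_cast (Fintype.card_subtype_le _).trans_eq (by simp)
  calc opNorm (of fun r c => ‖B r c‖) ^ 2
      ≤ ∑ r, ∑ c, ‖B r c‖ ^ 2 := opNorm_sq_le_sum_sq _
    _ = ∑ x, (1 + ∑ p, ‖A x p‖ ^ 2) + Fintype.card (Σ j, Σ b, Iin j b) := by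
      rw [hB_blocks, sum_sq_norm_fromBlocks, sum_sq_norm_one]
      simp [sum_add_distrib]
    _ ≤ ∑ _x : {x // f x = false}, (1 + W) + Fintype.card (Σ j, Σ b, Iin j b) := by
      gcongr with x
      exact canonicalSP_sum_norm_sq_le_wsize_div hs x.2 (horth x x.2) (hopt x x.2)
    _ ≤ 2 ^ k * (1 + W) + Fintype.card (Σ j, Σ b, Iin j b) := by
      rw [sum_const, card_univ, nsmul_eq_mul]
      gcongr
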